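/- arXiv:1810.07896 — 3 statements merged into one kernel-verified Lean document; each statement's English description precedes it below -/
import Mathlib

section
/- For any λ > 0, any r ∈ ℝⁿ, and any v ∈ ℝⁿ with ‖v‖_∞ ≤ 1/λ, the function Φ_λ(r) = Σᵢ cosh(λ rᵢ) satisfies Φ_λ(r + v) ≤ Φ_λ(r) + ⟨∇Φ_λ(r), v⟩ + 2 Σᵢ λ² cosh(λ rᵢ) vᵢ². -/
/-!
Taylor's bound `exp x ≤ 1 + x + x²` for `|x| ≤ 1`, applied to `exp (±(a + b)) = exp (±a) exp (±b)`
and averaged, gives `cosh (a + b) ≤ cosh a + sinh a · b + cosh a · b²` for `|b| ≤ 1`.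
Summing this over `i` with `a = λ rᵢ` and `b = λ vᵢ` gives the claim.
-/

open Real Finset

namespace Real

theorem exp_le_one_add_add_sq {x : ℝ} (hx : |x| ≤ 1) : exp x ≤ 1 + x + x ^ 2 := by
  linarith [(abs_le.mp (abs_exp_sub_one_sub_id_le hx)).2]

theorem cosh_add_le {a b : ℝ} (hb : |b| ≤ 1) :
    cosh (a + b) ≤ cosh a + sinh a * b + cosh a * b ^ 2 := by
  have hpos : exp (a + b) ≤ exp a * (1 + b + b ^ 2) := by
    rw [exp_add]
    exact mul_le_mul_of_nonneg_left (exp_le_one_add_add_sq hb) (exp_pos a).le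
  have hneg : exp (-(a + b)) ≤ exp (-a) * (1 + -b + (-b) ^ 2) := by
    rw [neg_add, exp_add]
    exact mul_le_mul_of_nonneg_left (exp_le_one_add_add_sq (by rwa [abs_neg])) (exp_pos _).le
  rw [cosh_eq, cosh_eq, sinh_eq]
  linarith

end Real

/-- For `λ > 0`, `r v : ℝⁿ` with `‖v‖_∞ ≤ 1/λ`, the potential `Φ_λ(r) = Σᵢ cosh(λ rᵢ)`
satisfies `Φ_λ(r+v) ≤ Φ_λ(r) + ⟨∇Φ_λ(r), v⟩ + 2 Σᵢ λ² cosh(λ rᵢ) vᵢ²`. -/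
theorem potential_second_order_bound {n : ℕ} (lam : ℝ) (hlam : 0 < lam)
    (r v : Fin n → ℝ) (hv : ∀ i, |v i| ≤ 1 / lam) :
    ∑ i, Real.cosh (lam * (r i + v i)) ≤
      ∑ i, Real.cosh (lam * r i)
        + ∑ i, (lam * Real.sinh (lam * r i)) * v i
        + 2 * ∑ i, lam ^ 2 * Real.cosh (lam * r i) * v i ^ 2 := by
  have hstep : ∀ i, |lam * v i| ≤ 1 := fun i ↦ by
    rw [abs_mul, abs_of_pos hlam, ← le_div_iff₀' hlam]
    exact hv i
  have hsecond : 0 ≤ ∑ i, lam ^ 2 * cosh (lam * r i) * v i ^ 2 :=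
    sum_nonneg fun i _ ↦ by positivity
  calc ∑ i, cosh (lam * (r i + v i))
      ≤ ∑ i, (cosh (lam * r i) + lam * sinh (lam * r i) * v i
          + lam ^ 2 * cosh (lam * r i) * v i ^ 2) := by
        refine sum_le_sum fun i _ ↦ ?_
        have := cosh_add_le (a := lam * r i) (hstep i)
        rw [mul_add]
        linarith
    _ ≤ _ := by
        rw [sum_add_distrib, sum_add_distrib]
        linarith
end

section
/- With ψ as the capped quadratic potential with parameter ε ∈ (0,1/4) (ψ(x) = x²/(2ε) for |x|≤ε, ψ(x) = ε − (2ε−|x|)²/(2ε) for ε<|x|≤2ε, ψ(x)=ε for |x|>2ε), for all real x, y with |y| ≤ min(ε, |x|·(1 − 1/log n)) and |x| ≥ ε/100 and n ≥ 4, we have ψ(x) − ψ(y) ≥ c·ε/log n for some universal constant c > 0. -/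
/-- The capped quadratic potential. -/
noncomputable def psi (ε x : ℝ) : ℝ :=
  if |x| ≤ ε then x ^ 2 / (2 * ε)
  else if |x| ≤ 2 * ε then ε - (2 * ε - |x|) ^ 2 / (2 * ε)
  else ε

/-!
Put `u = 1 / log n ∈ (0, 1]`. On `|x| ≤ ε` the potential is the parabola `x² / (2ε)`, so shrinking
`|x|` by the factor `1 - u` lowers it by at least `|x|² u / (2ε)`. For `|x| > ε`, let `d = ε u / 2`:
either `|y| ≤ ε - d`, or else `|x| ≥ |y| / (1 - u) ≥ ε + d`. Since `ψ` is monotone in `|x|` and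
`ψ(ε + d) - ψ(ε) = ψ(ε) - ψ(ε - d)`, both cases give `ψ(x) - ψ(y) ≥ ψ(ε) - ψ(ε - d) ≥ ε u / 4`.
-/

section
variable {ε u x y : ℝ}

lemma psi_of_abs_le (h : |x| ≤ ε) : psi ε x = |x| ^ 2 / (2 * ε) := by
  rw [psi, if_pos h, sq_abs]

lemma psi_of_le_abs_of_abs_le (hε : 0 < ε) (h₁ : ε ≤ |x|) (h₂ : |x| ≤ 2 * ε) :
    psi ε x = ε - (2 * ε - |x|) ^ 2 / (2 * ε) := by
  rw [psi, ← sq_abs x]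
  split_ifs with h
  · rw [le_antisymm h h₁]; field_simp; ring
  · rfl

lemma psi_le_psi_of_abs_le (hε : 0 < ε) (h : |x| ≤ |y|) : psi ε x ≤ psi ε y := by
  have hx := abs_nonneg x
  rw [psi, psi, ← sq_abs x, ← sq_abs y]
  split_ifs <;> field_simp <;> nlinarith

lemma psi_sub_psi_ge_of_abs_le (hu₀ : 0 ≤ u) (hu₁ : u ≤ 1) (hx : |x| ≤ ε)
    (hy : |y| ≤ |x| * (1 - u)) : |x| ^ 2 * u / (2 * ε) ≤ psi ε x - psi ε y := by
  have hyε : |y| ≤ ε := hy.trans (by nlinarith [abs_nonneg x])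
  rw [psi_of_abs_le hx, psi_of_abs_le hyε, ← sub_div]
  gcongr
  · linarith [abs_nonneg x]
  nlinarith [abs_nonneg y, mul_nonneg (mul_nonneg (sq_nonneg |x|) hu₀) (sub_nonneg.2 hu₁)]

lemma psi_sub_psi_ge_of_lt_abs (hε : 0 < ε) (hu₀ : 0 ≤ u) (hu₁ : u ≤ 1) (hx : ε < |x|)
    (hyε : |y| ≤ ε) (hy : |y| ≤ |x| * (1 - u)) : ε * u / 4 ≤ psi ε x - psi ε y := by
  set d := ε * u / 2 with hd
  have hd₀ : 0 ≤ d := by positivity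
  have hdε : d ≤ ε := by nlinarith
  have hε_sub : |ε - d| = ε - d := abs_of_nonneg (by linarith)
  have hε_add : |ε + d| = ε + d := abs_of_nonneg (by linarith)
  have hε_abs : |ε| = ε := abs_of_pos hε
  have hψε : psi ε ε = ε / 2 := by rw [psi_of_abs_le hε_abs.le, hε_abs]; field_simp
  have hψsub : psi ε (ε - d) = (ε - d) ^ 2 / (2 * ε) := by
    rw [psi_of_abs_le (by linarith), hε_sub]
  have hψadd : psi ε (ε + d) = ε - (ε - d) ^ 2 / (2 * ε) := by
    rw [psi_of_le_abs_of_abs_le hε (by linarith) (by linarith), hε_add]; ring_nf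
  have key : ε * u / 4 ≤ ε / 2 - (ε - d) ^ 2 / (2 * ε) := by
    rw [← sub_nonneg]
    have : ε / 2 - (ε - d) ^ 2 / (2 * ε) - ε * u / 4 = d * (ε - d) / (2 * ε) := by
      field_simp; ring
    rw [this]; positivity
  rcases le_or_gt |y| (ε - d) with hy' | hy'
  · have h₁ := psi_le_psi_of_abs_le hε (hε_abs.trans_le hx.le)
    have h₂ := psi_le_psi_of_abs_le hε (hy'.trans_eq hε_sub.symm)
    linarith
  · have hxd : ε + d ≤ |x| := by
      by_contra! hlt
      nlinarith [mul_le_mul_of_nonneg_right hlt.le (sub_nonneg.2 hu₁)]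
    have h₁ := psi_le_psi_of_abs_le hε (hε_add.trans_le hxd)
    have h₂ := psi_le_psi_of_abs_le hε (hyε.trans_eq hε_abs.symm)
    linarith

lemma psi_sub_psi_ge (hε : 0 < ε) (hu₀ : 0 ≤ u) (hu₁ : u ≤ 1) (hyε : |y| ≤ ε)
    (hy : |y| ≤ |x| * (1 - u)) (hx : ε / 100 ≤ |x|) : ε * u / 20000 ≤ psi ε x - psi ε y := by
  rcases le_or_gt |x| ε with hxε | hεx
  · calc ε * u / 20000 = (ε / 100) ^ 2 * u / (2 * ε) := by field_simp; ring
      _ ≤ |x| ^ 2 * u / (2 * ε) := by gcongr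
      _ ≤ psi ε x - psi ε y := psi_sub_psi_ge_of_abs_le hu₀ hu₁ hxε hy
  · calc ε * u / 20000 ≤ ε * u / 4 := by gcongr; norm_num
      _ ≤ psi ε x - psi ε y := psi_sub_psi_ge_of_lt_abs hε hu₀ hu₁ hεx hyε hy

end

lemma one_le_log_of_four_le {n : ℕ} (hn : 4 ≤ n) : 1 ≤ Real.log n := by
  have hn' : (4 : ℝ) ≤ n := by exact_mod_cast hn
  rw [Real.le_log_iff_exp_le (by linarith)]
  linarith [Real.exp_one_lt_three]

/-- Quantitative gap for the capped quadratic potential: there is a universal constant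
`c > 0` such that for all `n ≥ 4`, `ε ∈ (0, 1/4)`, and reals `x, y` with
`|y| ≤ min(ε, |x|(1 − 1/log n))` and `|x| ≥ ε/100`, we have
`ψ(x) − ψ(y) ≥ c ε / log n`. -/
theorem psi_gap :
    ∃ c : ℝ, 0 < c ∧ ∀ (n : ℕ) (ε x y : ℝ), 4 ≤ n → 0 < ε → ε < 1 / 4 →
      |y| ≤ min ε (|x| * (1 - 1 / Real.log n)) → ε / 100 ≤ |x| →
      c * ε / Real.log n ≤ psi ε x - psi ε y := by
  refine ⟨1 / 20000, by norm_num, fun n ε x y hn hε _ hy hx => ?_⟩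
  have hlog := one_le_log_of_four_le hn
  have hu₁ : 1 / Real.log n ≤ 1 := (div_le_one₀ (by linarith)).2 hlog
  calc 1 / 20000 * ε / Real.log n = ε * (1 / Real.log n) / 20000 := by ring
    _ ≤ psi ε x - psi ε y :=
      psi_sub_psi_ge hε (by positivity) hu₁ (le_min_iff.1 hy).1 (le_min_iff.1 hy).2 hx
end

section
/- Let μ ∈ ℝⁿ be positive, and suppose random vectors 𝛿̃_x, 𝛿̃_s satisfy ‖E[x⁻¹𝛿̃_x]‖₂ ≤ 2ε, ‖E[s⁻¹𝛿̃_s]‖₂ ≤ 2ε, Var[x_i⁻¹𝛿̃_{x,i}] ≤ 2ε²/k, Var[s_i⁻¹𝛿̃_{s,i}] ≤ 2ε²/k for all i, where μ = xs. Then ‖E[μ⁻¹ 𝛿̃_x 𝛿̃_s]‖₂ ≤ 4ε² + 2√n·ε²/k (entrywise product 𝛿̃_x 𝛿̃_s). -/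
/-! Writing `u = x⁻¹δ̃ₓ` and `v = s⁻¹δ̃ₛ`, each coordinate satisfies `E[uᵢvᵢ] = E[uᵢ]E[vᵢ] + Cov(uᵢ, vᵢ)`,
and `|Cov(uᵢ, vᵢ)| ≤ (Var uᵢ + Var vᵢ)/2 ≤ 2ε²/k` because `Var(uᵢ ± vᵢ) ≥ 0`. In ℓ² the vector of
products of means has norm at most `‖E u‖₂ ‖E v‖₂ ≤ 4ε²`, and the constant vector `2ε²/k` has
norm `√n · 2ε²/k`. -/

open MeasureTheory ProbabilityTheory Finset

namespace ProbabilityTheory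

variable {Ω : Type*} {mΩ : MeasurableSpace Ω} {μ : Measure Ω} {X Y : Ω → ℝ}

lemma abs_covariance_le_add_variance_div_two [IsFiniteMeasure μ] (hX : MemLp X 2 μ)
    (hY : MemLp Y 2 μ) : |cov[X, Y; μ]| ≤ (Var[X; μ] + Var[Y; μ]) / 2 := by
  have h_add := variance_nonneg (X + Y) μ
  have h_sub := variance_nonneg (X - Y) μ
  rw [variance_add hX hY] at h_add
  rw [variance_sub hX hY] at h_sub
  rw [abs_le]
  constructor <;> linarith

lemma abs_integral_mul_le [IsProbabilityMeasure μ] (hX : MemLp X 2 μ) (hY : MemLp Y 2 μ) :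
    |μ[X * Y]| ≤ |μ[X] * μ[Y]| + (Var[X; μ] + Var[Y; μ]) / 2 := by
  have h_cov := abs_covariance_le_add_variance_div_two hX hY
  rw [covariance_eq_sub hX hY] at h_cov
  calc |μ[X * Y]| = |μ[X] * μ[Y] + (μ[X * Y] - μ[X] * μ[Y])| := by ring_nf
    _ ≤ _ := (abs_add_le _ _).trans (by gcongr)

end ProbabilityTheory

section EuclideanNorm

variable {ι : Type*} [Fintype ι]

lemma sqrt_sum_sq_eq_norm (v : ι → ℝ) :
    √(∑ i, v i ^ 2) = ‖WithLp.toLp 2 v‖ := by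
  simp [EuclideanSpace.norm_eq]

lemma sqrt_sum_sq_le_of_abs_le {u v : ι → ℝ} (h : ∀ i, |u i| ≤ v i) :
    √(∑ i, u i ^ 2) ≤ √(∑ i, v i ^ 2) := by
  refine Real.sqrt_le_sqrt (sum_le_sum fun i _ => ?_)
  exact sq_le_sq' (neg_le_of_abs_le (h i)) (le_of_abs_le (h i))

lemma sqrt_sum_sq_add_le (u v : ι → ℝ) :
    √(∑ i, (u i + v i) ^ 2) ≤ √(∑ i, u i ^ 2) + √(∑ i, v i ^ 2) := by
  simp only [sqrt_sum_sq_eq_norm]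
  exact norm_add_le (WithLp.toLp 2 u) (WithLp.toLp 2 v)

lemma sqrt_sum_sq_mul_le (u v : ι → ℝ) :
    √(∑ i, (u i * v i) ^ 2) ≤ √(∑ i, u i ^ 2) * √(∑ i, v i ^ 2) := by
  rw [← Real.sqrt_mul (by positivity), Finset.sum_mul]
  gcongr with i
  rw [mul_pow]
  gcongr
  exact single_le_sum (fun j _ => sq_nonneg (v j)) (mem_univ i)

lemma sqrt_sum_const_sq {c : ℝ} (hc : 0 ≤ c) :
    √(∑ _i : ι, c ^ 2) = √(Fintype.card ι) * c := by
  rw [sum_const, card_univ, nsmul_eq_mul, Real.sqrt_mul (Nat.cast_nonneg _), Real.sqrt_sq hc]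

end EuclideanNorm

lemma sqrt_sum_sq_le_of_abs_le_abs_mul_add {ι : Type*} [Fintype ι] {e a b : ι → ℝ} {c : ℝ}
    (hc : 0 ≤ c) (h : ∀ i, |e i| ≤ |a i * b i| + c) :
    √(∑ i, e i ^ 2) ≤ √(∑ i, a i ^ 2) * √(∑ i, b i ^ 2) + √(Fintype.card ι) * c :=
  calc √(∑ i, e i ^ 2) ≤ √(∑ i, (|a i * b i| + c) ^ 2) := sqrt_sum_sq_le_of_abs_le h
    _ ≤ √(∑ i, |a i * b i| ^ 2) + √(∑ _i : ι, c ^ 2) := sqrt_sum_sq_add_le _ _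
    _ = √(∑ i, (a i * b i) ^ 2) + √(Fintype.card ι) * c := by
      simp only [sq_abs, sqrt_sum_const_sq hc]
    _ ≤ _ := by gcongr; exact sqrt_sum_sq_mul_le a b

theorem second_order_term_bound_general {Ω : Type*} [MeasurableSpace Ω] {μ : Measure Ω}
    [IsProbabilityMeasure μ] {n : ℕ} (x s : Fin n → ℝ)
    (dx ds : Fin n → Ω → ℝ) (ε k : ℝ) (hk : 0 < k)
    (hdx2 : ∀ i, MemLp (dx i) 2 μ) (hds2 : ∀ i, MemLp (ds i) 2 μ)
    (hEx : Real.sqrt (∑ i, (μ[fun ω => (x i)⁻¹ * dx i ω]) ^ 2) ≤ 2 * ε)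
    (hEs : Real.sqrt (∑ i, (μ[fun ω => (s i)⁻¹ * ds i ω]) ^ 2) ≤ 2 * ε)
    (hVx : ∀ i, variance (fun ω => (x i)⁻¹ * dx i ω) μ ≤ 2 * ε ^ 2 / k)
    (hVs : ∀ i, variance (fun ω => (s i)⁻¹ * ds i ω) μ ≤ 2 * ε ^ 2 / k) :
    Real.sqrt (∑ i, (μ[fun ω => (x i * s i)⁻¹ * (dx i ω * ds i ω)]) ^ 2) ≤
      4 * ε ^ 2 + 2 * Real.sqrt n * ε ^ 2 / k := by
  set X : Fin n → Ω → ℝ := fun i ω => (x i)⁻¹ * dx i ω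
  set Y : Fin n → Ω → ℝ := fun i ω => (s i)⁻¹ * ds i ω
  have h_prod (i : Fin n) : (fun ω => (x i * s i)⁻¹ * (dx i ω * ds i ω)) = X i * Y i := by
    ext ω
    simp only [X, Y, Pi.mul_apply, mul_inv]
    ring
  have h_coord (i : Fin n) : |μ[X i * Y i]| ≤ |μ[X i] * μ[Y i]| + 2 * ε ^ 2 / k :=
    (abs_integral_mul_le ((hdx2 i).const_mul _) ((hds2 i).const_mul _)).trans
      (by linarith [hVx i, hVs i])
  calc √(∑ i, (μ[fun ω => (x i * s i)⁻¹ * (dx i ω * ds i ω)]) ^ 2)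
      = √(∑ i, μ[X i * Y i] ^ 2) := by simp only [h_prod]
    _ ≤ √(∑ i, μ[X i] ^ 2) * √(∑ i, μ[Y i] ^ 2) + √(Fintype.card (Fin n)) * (2 * ε ^ 2 / k) :=
      sqrt_sum_sq_le_of_abs_le_abs_mul_add (by positivity) h_coord
    _ ≤ (2 * ε) * (2 * ε) + √n * (2 * ε ^ 2 / k) := by
      rw [Fintype.card_fin]
      gcongr ?_ + _
      exact mul_le_mul hEx hEs (Real.sqrt_nonneg _) ((Real.sqrt_nonneg _).trans hEx)
    _ = 4 * ε ^ 2 + 2 * √n * ε ^ 2 / k := by ring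

/-- If `‖E[x⁻¹δ̃x]‖₂ ≤ 2ε`, `‖E[s⁻¹δ̃s]‖₂ ≤ 2ε` and each coordinate has variance at most
`2ε²/k`, then `‖E[μ⁻¹ δ̃x δ̃s]‖₂ ≤ 4ε² + 2√n ε²/k` where `μ = xs` (entrywise product). -/
theorem second_order_term_bound {Ω : Type*} [MeasurableSpace Ω] {μ : Measure Ω}
    [IsProbabilityMeasure μ] {n : ℕ} (x s : Fin n → ℝ)
    (hx : ∀ i, 0 < x i) (hs : ∀ i, 0 < s i)
    (dx ds : Fin n → Ω → ℝ) (ε k : ℝ) (hε : 0 ≤ ε) (hk : 0 < k)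
    (hdx2 : ∀ i, MemLp (dx i) 2 μ) (hds2 : ∀ i, MemLp (ds i) 2 μ)
    (hEx : Real.sqrt (∑ i, (μ[fun ω => (x i)⁻¹ * dx i ω]) ^ 2) ≤ 2 * ε)
    (hEs : Real.sqrt (∑ i, (μ[fun ω => (s i)⁻¹ * ds i ω]) ^ 2) ≤ 2 * ε)
    (hVx : ∀ i, variance (fun ω => (x i)⁻¹ * dx i ω) μ ≤ 2 * ε ^ 2 / k)
    (hVs : ∀ i, variance (fun ω => (s i)⁻¹ * ds i ω) μ ≤ 2 * ε ^ 2 / k) :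
    Real.sqrt (∑ i, (μ[fun ω => (x i * s i)⁻¹ * (dx i ω * ds i ω)]) ^ 2) ≤
      4 * ε ^ 2 + 2 * Real.sqrt n * ε ^ 2 / k :=
  second_order_term_bound_general x s dx ds ε k hk hdx2 hds2 hEx hEs hVx hVs
end
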